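/- The cVPND problem contains the minimum Steiner tree problem as a special case: for every finite simple undirected connected graph G = (V,E), edge costs c ∈ ℝ^E_+, and set of terminals W ⊆ V with |W| ≥ 2, if one takes the demand vector b with b_v = 1 for v ∈ W and b_v = 0 otherwise, and the non-decreasing concave cost function f(x) = min(x, 1), then the minimum over all routings P of the cost ∑_{e∈E} c_e · f(γ_e(P)) equals the minimum total edge cost ∑_{e∈E(T)} c_e over all subtrees T of G that contain every terminal in W (i.e., the minimum Steiner tree cost for the terminal set W). -/

import Mathlib

/-!
With unit demands at the terminals, the capacity a routing needs on an edge is `0` if none of its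
paths uses the edge and at least `1` otherwise: a single unit demand between the two ends of a path
through the edge is feasible. With `f = min · 1` a routing therefore costs exactly the total cost of
the edges it uses. The paths of a routing from one terminal to all others form a connected subgraph
containing the terminals, and a spanning tree of it is a Steiner tree using only those edges;
conversely, the tree paths of a Steiner tree form a routing that uses only tree edges. As costs are
nonnegative, every routing is beaten by some Steiner tree and vice versa.
-/

open scoped Classical

namespace VPND

variable {V : Type} [Fintype V] [DecidableEq V]

/-- The set of terminals: vertices with positive maximum cumulative demand. -/
def Terminals (b : V → ℕ) : Set V := {v | 0 < b v}

/-- A routing: one path `path u v` between each pair of terminals, where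
`path v u` is required to be the reverse of `path u v`, so that there is
exactly one path per *unordered* pair of terminals. -/
structure Routing (G : SimpleGraph V) (W : Set V) where
  path : ∀ u v : W, G.Walk u.1 v.1
  isPath : ∀ u v : W, (path u v).IsPath
  symm : ∀ u v : W, path v u = (path u v).reverse

/-- A feasible demand matrix: nonnegative, symmetric, zero on the diagonal,
supported on pairs of terminals, and such that the cumulative demand at each
vertex `v` is at most `b v`. -/
def Feasible (b : V → ℕ) (d : V → V → ℝ) : Prop :=
  (∀ u v, 0 ≤ d u v) ∧ (∀ u v, d u v = d v u) ∧ (∀ v, d v v = 0) ∧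
    (∀ u v, d u v ≠ 0 → 0 < b u ∧ 0 < b v) ∧
    (∀ v, ∑ u, d u v ≤ (b v : ℝ))

/-- The traffic load put on edge `e` when the demands `d` are routed along the
routing `R`: the sum of `d u v` over all unordered pairs `{u,v}` of terminals
whose path uses `e` (each unordered pair is counted twice in the double sum,
whence the factor `1/2`). -/
noncomputable def load {G : SimpleGraph V} (b : V → ℕ) (R : Routing G (Terminals b))
    (d : V → V → ℝ) (e : Sym2 V) : ℝ :=
  (1 / 2) * ∑ u : V, ∑ v : V,
    if h : 0 < b u ∧ 0 < b v then
      (if e ∈ (R.path ⟨u, h.1⟩ ⟨v, h.2⟩).edges then d u v else 0)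
    else 0

/-- The capacity that the routing `R` requires on the edge `e`: the maximum,
over all feasible demand matrices `d`, of the load on `e`. -/
noncomputable def capacity {G : SimpleGraph V} (b : V → ℕ) (R : Routing G (Terminals b))
    (e : Sym2 V) : ℝ :=
  sSup {x | ∃ d : V → V → ℝ, Feasible b d ∧ x = load b R d e}

/-- The cost of the routing `R` with concave cost function `f`:
`∑ e, c e * f (γ_e(R))`. -/
noncomputable def costConcave {G : SimpleGraph V} (c : Sym2 V → ℝ) (b : V → ℕ)
    (f : ℝ → ℝ) (R : Routing G (Terminals b)) : ℝ :=
  ∑ e ∈ G.edgeFinset, c e * f (capacity b R e)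

end VPND

namespace SimpleGraph.Subgraph

variable {V : Type*} {G : SimpleGraph V}

lemma connected_iSup {ι : Type*} [Nonempty ι] {H : ι → G.Subgraph} {u : V}
    (hH : ∀ i, (H i).Connected) (hu : ∀ i, u ∈ (H i).verts) : (⨆ i, H i).Connected := by
  rw [Subgraph.connected_iff', connected_iff_exists_forall_reachable]
  refine ⟨⟨u, verts_iSup ▸ Set.mem_iUnion.2 ⟨Classical.arbitrary ι, hu _⟩⟩, ?_⟩
  rintro ⟨v, hv⟩
  obtain ⟨i, hi⟩ := Set.mem_iUnion.1 (verts_iSup ▸ hv)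
  exact Reachable.map (Subgraph.inclusion (le_iSup H i)) ((hH i).preconnected ⟨u, hu i⟩ ⟨v, hi⟩)

lemma Connected.exists_isTree_le {H : G.Subgraph} (hH : H.Connected) :
    ∃ T ≤ H, T.verts = H.verts ∧ T.coe.IsTree := by
  obtain ⟨F, hFH, hF⟩ := hH.coe.exists_isTree_le
  let T : G.Subgraph :=
    { verts := H.verts
      Adj a b := ∃ ha hb, F.Adj ⟨a, ha⟩ ⟨b, hb⟩
      adj_sub := fun ⟨_, _, h⟩ => H.adj_sub (hFH h)
      edge_vert := fun ⟨ha, _, _⟩ => ha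
      symm := ⟨fun _ _ ⟨ha, hb, h⟩ => ⟨hb, ha, h.symm⟩⟩ }
  have hTF : T.coe = F := by
    ext a b
    exact ⟨fun ⟨_, _, h⟩ => h, fun h => ⟨a.2, b.2, h⟩⟩
  exact ⟨T, ⟨le_rfl, fun _ _ ⟨_, _, h⟩ => hFH h⟩, rfl, hTF ▸ hF⟩

end SimpleGraph.Subgraph

namespace VPND

open SimpleGraph

section

variable {V : Type} {G : SimpleGraph V} {W : Set V}

def Routing.Uses (R : Routing G W) (e : Sym2 V) : Prop :=
  ∃ u v : W, e ∈ (R.path u v).edges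

lemma exists_routing_forall_uses_mem (T : G.Subgraph) (hWT : W ⊆ T.verts) (hT : T.coe.IsTree) :
    ∃ R : Routing G W, ∀ e, R.Uses e → e ∈ T.edgeSet := by
  have mem (u : W) : u.1 ∈ T.verts := hWT u.2
  choose p hp hpu using fun u v : W => hT.existsUnique_path ⟨u, mem u⟩ ⟨v, mem v⟩
  have hinj : Function.Injective T.hom := Subtype.val_injective
  refine ⟨⟨fun u v => (p u v).map T.hom, fun u v => (hp u v).map hinj, fun u v => ?_⟩, ?_⟩
  · rw [← hpu v u _ (hp u v).reverse]
    exact (Walk.reverse_map ..).symm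
  · rintro e ⟨u, v, he⟩
    replace he : e ∈ ((p u v).map T.hom).edges := he
    obtain ⟨e', he', rfl⟩ := List.mem_map.1 (Walk.edges_map .. ▸ he)
    exact T.image_coe_edgeSet_coe ▸ ⟨e', (p u v).edges_subset_edgeSet he', rfl⟩

lemma exists_isTree_forall_uses (hW : W.Nonempty) (R : Routing G W) :
    ∃ T : G.Subgraph, W ⊆ T.verts ∧ T.coe.IsTree ∧ ∀ e ∈ T.edgeSet, R.Uses e := by
  obtain ⟨u, hu⟩ := hW
  have : Nonempty W := ⟨⟨u, hu⟩⟩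
  let H := ⨆ v : W, (R.path ⟨u, hu⟩ v).toSubgraph
  have hH : H.Connected := Subgraph.connected_iSup (fun v => (R.path _ v).toSubgraph_connected)
    (fun v => (R.path _ v).start_mem_verts_toSubgraph)
  obtain ⟨T, hTH, hTv, hT⟩ := hH.exists_isTree_le
  refine ⟨T, fun v hv => ?_, hT, fun e he => ?_⟩
  · rw [hTv, Subgraph.verts_iSup]
    exact Set.mem_iUnion.2 ⟨⟨v, hv⟩, Walk.end_mem_verts_toSubgraph _⟩
  · have := Subgraph.edgeSet_mono hTH he
    rw [Subgraph.edgeSet_iSup, Set.mem_iUnion] at this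
    obtain ⟨v, hv⟩ := this
    exact ⟨_, v, (Walk.mem_edges_toSubgraph _).1 hv⟩

noncomputable def pairDemand (u v : V) : V → V → ℝ :=
  fun x y => if s(x, y) = s(u, v) then 1 else 0

lemma pairDemand_apply {u v : V} (huv : u ≠ v) (x y : V) :
    pairDemand u v x y = (if x = u ∧ y = v then 1 else 0) + (if x = v ∧ y = u then 1 else 0) := by
  by_cases h1 : x = u ∧ y = v
  · obtain ⟨rfl, rfl⟩ := h1
    simp [pairDemand, huv.symm]
  · simp [pairDemand, h1]

end

section

variable {V : Type} [Fintype V] {b : V → ℕ}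

lemma feasible_zero : Feasible b 0 :=
  ⟨fun _ _ => le_rfl, fun _ _ => rfl, fun _ => rfl, fun _ _ h => absurd rfl h,
    fun _ => by simp⟩

lemma feasible_pairDemand {u v : V} (huv : u ≠ v) (hu : 0 < b u) (hv : 0 < b v) :
    Feasible b (pairDemand u v) := by
  refine ⟨fun x y => ?_, fun x y => ?_, fun x => ?_, fun x y h => ?_, fun y => ?_⟩
  · unfold pairDemand; positivity
  · simp only [pairDemand, Sym2.eq_swap]
  · rw [pairDemand, if_neg]
    intro h
    obtain ⟨rfl, rfl⟩ | ⟨rfl, rfl⟩ := Sym2.eq_iff.1 h <;> exact huv rfl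
  · have hxy : s(x, y) = s(u, v) := by by_contra hne; exact h (if_neg hne)
    obtain ⟨rfl, rfl⟩ | ⟨rfl, rfl⟩ := Sym2.eq_iff.1 hxy
    exacts [⟨hu, hv⟩, ⟨hv, hu⟩]
  · simp only [pairDemand_apply huv, ite_and, Finset.sum_add_distrib, Finset.sum_ite_eq',
      Finset.mem_univ, ↓reduceIte]
    split_ifs with hyv hyu hyu
    · exact absurd (hyu.symm.trans hyv) huv
    · simpa [hyv] using (Nat.one_le_cast (α := ℝ)).2 hv
    · simpa [hyu] using (Nat.one_le_cast (α := ℝ)).2 hu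
    · simp

lemma sum_sum_pairDemand {u v : V} (huv : u ≠ v) : ∑ x, ∑ y, pairDemand u v x y = 2 := by
  simp only [pairDemand_apply huv, ite_and, Finset.sum_add_distrib, Finset.sum_ite_irrel,
    Finset.sum_ite_eq', Finset.mem_univ, ↓reduceIte, Finset.sum_const_zero]
  norm_num

end

section

variable {V : Type} [Fintype V] [DecidableEq V] {G : SimpleGraph V} {b : V → ℕ}
  {R : Routing G (Terminals b)} {e : Sym2 V}

lemma load_le_of_feasible {d : V → V → ℝ} (hd : Feasible b d) :
    load b R d e ≤ (∑ v, (b v : ℝ)) / 2 := by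
  have hterm (u v : V) :
      (if h : 0 < b u ∧ 0 < b v then
        (if e ∈ (R.path ⟨u, h.1⟩ ⟨v, h.2⟩).edges then d u v else 0) else 0) ≤ d u v := by
    split_ifs <;> first | exact le_rfl | exact hd.1 u v
  have hsum : ∑ u, ∑ v, d u v ≤ ∑ v, (b v : ℝ) := by
    rw [Finset.sum_comm]
    exact Finset.sum_le_sum fun v _ => hd.2.2.2.2 v
  have := (Finset.sum_le_sum fun u _ => Finset.sum_le_sum fun v _ => hterm u v).trans hsum
  rw [load]
  linarith

lemma bddAbove_loads : BddAbove {x | ∃ d, Feasible b d ∧ x = load b R d e} :=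
  ⟨_, fun _ ⟨_, hd, hx⟩ => hx ▸ load_le_of_feasible hd⟩

lemma load_eq_zero_of_not_uses (h : ¬R.Uses e) (d : V → V → ℝ) : load b R d e = 0 := by
  refine mul_eq_zero_of_right _ (Finset.sum_eq_zero fun u _ => Finset.sum_eq_zero fun v _ => ?_)
  split_ifs with _ he
  exacts [absurd ⟨_, _, he⟩ h, rfl, rfl]

lemma capacity_eq_zero_of_not_uses (h : ¬R.Uses e) : capacity b R e = 0 := by
  have hloads : {x | ∃ d, Feasible b d ∧ x = load b R d e} = {0} :=
    Set.eq_singleton_iff_unique_mem.2 ⟨⟨0, feasible_zero, (load_eq_zero_of_not_uses h 0).symm⟩,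
      fun _ ⟨d, _, hx⟩ => hx.trans (load_eq_zero_of_not_uses h d)⟩
  rw [capacity, hloads, csSup_singleton]

lemma load_eq_half_sum {d : V → V → ℝ}
    (hd : ∀ u v, d u v ≠ 0 → ∃ (hu : 0 < b u) (hv : 0 < b v), e ∈ (R.path ⟨u, hu⟩ ⟨v, hv⟩).edges) :
    load b R d e = (∑ u, ∑ v, d u v) / 2 := by
  rw [load, one_div_mul_eq_div]
  congr 1
  refine Finset.sum_congr rfl fun u _ => Finset.sum_congr rfl fun v _ => ?_
  by_cases h0 : d u v = 0
  · simp [h0]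
  · obtain ⟨hu, hv, he⟩ := hd u v h0
    rw [dif_pos ⟨hu, hv⟩, if_pos he]

lemma load_pairDemand {u v : Terminals b} (huv : u.1 ≠ v.1) (he : e ∈ (R.path u v).edges) :
    load b R (pairDemand u v) e = 1 := by
  rw [load_eq_half_sum, sum_sum_pairDemand huv, div_self two_ne_zero]
  intro x y h
  have hxy : s(x, y) = s(u.1, v.1) := by by_contra hne; exact h (if_neg hne)
  obtain ⟨rfl, rfl⟩ | ⟨rfl, rfl⟩ := Sym2.eq_iff.1 hxy
  · exact ⟨u.2, v.2, he⟩
  · exact ⟨v.2, u.2, by rwa [R.symm, Walk.edges_reverse, List.mem_reverse]⟩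

lemma one_le_capacity_of_uses (h : R.Uses e) : 1 ≤ capacity b R e := by
  obtain ⟨u, v, he⟩ := h
  have huv : u.1 ≠ v.1 := by
    rintro huv
    obtain rfl : u = v := Subtype.ext huv
    rw [Walk.edges_eq_nil.2 (Walk.isPath_iff_nil.1 (R.isPath u u))] at he
    exact List.not_mem_nil he
  exact le_csSup bddAbove_loads
    ⟨pairDemand u v, feasible_pairDemand huv u.2 v.2, (load_pairDemand huv he).symm⟩

lemma costConcave_min_one_eq (c : Sym2 V → ℝ) (R : Routing G (Terminals b)) :
    costConcave c b (fun t => min t 1) R = ∑ e ∈ G.edgeFinset with R.Uses e, c e := by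
  rw [Finset.sum_filter, costConcave]
  refine Finset.sum_congr rfl fun e _ => ?_
  by_cases h : R.Uses e
  · rw [if_pos h, min_eq_right (one_le_capacity_of_uses h), mul_one]
  · rw [if_neg h, capacity_eq_zero_of_not_uses h, min_eq_left zero_le_one, mul_zero]

variable {c : Sym2 V → ℝ}

lemma costConcave_min_one_le (hc : ∀ e, 0 ≤ c e) {T : G.Subgraph}
    (hRT : ∀ e, R.Uses e → e ∈ T.edgeSet) :
    costConcave c b (fun t => min t 1) R ≤ ∑ e ∈ T.edgeSet.toFinset, c e := by
  rw [costConcave_min_one_eq]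
  refine Finset.sum_le_sum_of_subset_of_nonneg (fun e he => ?_) fun e _ _ => hc e
  exact Set.mem_toFinset.2 (hRT e (Finset.mem_filter.1 he).2)

lemma le_costConcave_min_one (hc : ∀ e, 0 ≤ c e) {T : G.Subgraph}
    (hTR : ∀ e ∈ T.edgeSet, R.Uses e) :
    ∑ e ∈ T.edgeSet.toFinset, c e ≤ costConcave c b (fun t => min t 1) R := by
  rw [costConcave_min_one_eq]
  refine Finset.sum_le_sum_of_subset_of_nonneg (fun e he => ?_) fun e _ _ => hc e
  have he := Set.mem_toFinset.1 he
  exact Finset.mem_filter.2 ⟨mem_edgeFinset.2 (T.edgeSet_subset he), hTR e he⟩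

end

variable {V : Type} [Fintype V] [DecidableEq V]

theorem cvpnd_contains_steiner_tree_general
    (G : SimpleGraph V)
    (c : Sym2 V → ℝ) (hc : ∀ e, 0 ≤ c e)
    (W : Set V) (hW : 2 ≤ W.ncard)
    (b : V → ℕ) (hb : ∀ v, b v = if v ∈ W then 1 else 0) :
    sInf {x : ℝ | ∃ R : Routing G (Terminals b),
        x = costConcave c b (fun t => min t 1) R} =
      sInf {x : ℝ | ∃ T : G.Subgraph, W ⊆ T.verts ∧ T.coe.IsTree ∧
        x = ∑ e ∈ T.edgeSet.toFinset, c e} := by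
  obtain rfl : Terminals b = W :=
    Set.ext fun v => by by_cases hv : v ∈ W <;> simp [Terminals, hb, hv]
  have hne : (Terminals b).Nonempty := Set.nonempty_of_ncard_ne_zero (by omega)
  refine csInf_eq_csInf_of_forall_exists_le ?_ ?_
  · rintro _ ⟨R, rfl⟩
    obtain ⟨T, hWT, hT, hTR⟩ := exists_isTree_forall_uses hne R
    exact ⟨_, ⟨T, hWT, hT, rfl⟩, le_costConcave_min_one hc hTR⟩
  · rintro _ ⟨T, hWT, hT, rfl⟩
    obtain ⟨R, hRT⟩ := exists_routing_forall_uses_mem T hWT hT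
    exact ⟨_, ⟨R, rfl⟩, costConcave_min_one_le hc hRT⟩

/-- **cVPND contains the minimum Steiner tree problem as a special case**:
for every connected graph `G`, nonnegative edge costs `c`, and terminal set
`W` with `|W| ≥ 2`, taking the demand vector `b` that is `1` on `W` and `0`
elsewhere, and the concave cost function `f x = min x 1`, the minimum cost of
a routing equals the minimum cost of a Steiner tree for `W`. -/
theorem cvpnd_contains_steiner_tree
    (G : SimpleGraph V) (hG : G.Connected)
    (c : Sym2 V → ℝ) (hc : ∀ e, 0 ≤ c e)
    (W : Set V) (hW : 2 ≤ W.ncard)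
    (b : V → ℕ) (hb : ∀ v, b v = if v ∈ W then 1 else 0) :
    sInf {x : ℝ | ∃ R : Routing G (Terminals b),
        x = costConcave c b (fun t => min t 1) R} =
      sInf {x : ℝ | ∃ T : G.Subgraph, W ⊆ T.verts ∧ T.coe.IsTree ∧
        x = ∑ e ∈ T.edgeSet.toFinset, c e} :=
  cvpnd_contains_steiner_tree_general G c hc W hW b hb

end VPND
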